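/- In a k-linear abelian rigid symmetric monoidal category with End(1) = k, splitting of a short exact sequence 0 → M → N → P → 0 with P dualizable is equivalent to splitting of the associated short exact sequence 0 → M ⊗ P^∨ → E → 1 → 0, where E is the preimage of the coevaluation image of 1 in P ⊗ P^∨ under the map N ⊗ P^∨ → P ⊗ P^∨. -/

import Mathlib

/-!
Tensoring with `P^∨` and pulling back along the coevaluation preserves split sequences, so a
splitting of `0 → M → N → P → 0` gives one of `0 → M ⊗ P^∨ → E → 1 → 0`. Conversely, a section
of `E → 1` is a morphism `1 → N ⊗ P^∨` lifting the coevaluation `1 → P ⊗ P^∨`; its mate `P → N`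
under the duality `(- ⊗ P ⟶ -) ≃ (- ⟶ - ⊗ P^∨)` is then a section of `N → P`, because the mate
of the coevaluation is the identity (zigzag identity).
-/

open CategoryTheory CategoryTheory.Limits CategoryTheory.MonoidalCategory

namespace Deligne

variable {C : Type*} [Category C] [Abelian C] [MonoidalCategory C] [SymmetricCategory C]

/-- Given a short exact sequence `0 → M → N → P → 0` (a short complex `S` with
`S.X₃ = P` rigid), the object `E`: the pullback of the coevaluation `1 → P ⊗ P^∨` along
`N ⊗ P^∨ → P ⊗ P^∨`, i.e. the preimage of the coevaluation image of `1` in `P ⊗ P^∨`. -/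
noncomputable def Eobj (S : ShortComplex C) [HasRightDual S.X₃] : C :=
  pullback (S.g ▷ (S.X₃)ᘁ) (η_ S.X₃ (S.X₃)ᘁ)

/-- The associated short complex `0 → M ⊗ P^∨ → E → 1 → 0` of the short exact sequence
`0 → M → N → P → 0`. -/
noncomputable def assocComplex [MonoidalPreadditive C]
    (S : ShortComplex C) [HasRightDual S.X₃] : ShortComplex C :=
  ShortComplex.mk
    (pullback.lift (S.f ▷ (S.X₃)ᘁ) 0
      (by rw [← comp_whiskerRight, S.zero, MonoidalPreadditive.zero_whiskerRight, zero_comp]) :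
        S.X₁ ⊗ (S.X₃)ᘁ ⟶ Eobj S)
    (pullback.snd (S.g ▷ (S.X₃)ᘁ) (η_ S.X₃ (S.X₃)ᘁ) : Eobj S ⟶ 𝟙_ C)
    (by simp [pullback.lift_snd])

end Deligne

namespace CategoryTheory

theorem isSplitEpi_of_comp_whiskerRight_eq_coevaluation {C : Type*} [Category C]
    [MonoidalCategory C] {P Z : C} [HasRightDual P] (g : Z ⟶ P) (h : 𝟙_ C ⟶ Z ⊗ Pᘁ)
    (hh : h ≫ g ▷ Pᘁ = η_ P Pᘁ) : IsSplitEpi g := by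
  let e := tensorRightHomEquiv (𝟙_ C) P Pᘁ
  refine IsSplitEpi.mk' ⟨(λ_ P).inv ≫ (e Z).symm h, ?_⟩
  have hmate : (e Z).symm h ≫ g = (e P).symm (h ≫ g ▷ Pᘁ) := by
    rw [Equiv.eq_symm_apply, tensorRightHomEquiv_naturality, Equiv.apply_symm_apply]
  have hcoev : (e P).symm (η_ P Pᘁ) = (λ_ P).hom := by
    simpa using tensorRightHomEquiv_symm_coevaluation_comp_whiskerRight (Y' := Pᘁ) (𝟙 P)
  rw [Category.assoc, hmate, hh, hcoev, Iso.inv_hom_id]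

namespace ShortComplex

variable {C : Type*} [Category C] [Preadditive C]

noncomputable abbrev pullbackAlong (T : ShortComplex C) {Y : C} (u : Y ⟶ T.X₃)
    [HasPullback T.g u] : ShortComplex C :=
  ShortComplex.mk (pullback.lift T.f 0 (by simp)) (pullback.snd T.g u)
    (by simp [pullback.lift_snd])

namespace Splitting

variable {T : ShortComplex C} {Y : C}

noncomputable def pullbackAlong (sp : T.Splitting) (u : Y ⟶ T.X₃) [HasPullback T.g u] :
    (T.pullbackAlong u).Splitting where
  r := pullback.fst T.g u ≫ sp.r
  s := pullback.lift (u ≫ sp.s) (𝟙 Y) (by simp)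
  f_r := by simp [pullback.lift_fst_assoc]
  s_g := pullback.lift_snd _ _ _
  id := by
    apply pullback.hom_ext
    · simp [pullback.lift_fst, ← pullback.condition_assoc, ← Preadditive.comp_add, sp.id]
    · simp [pullback.lift_snd]

theorem s_fst_comp_g {u : Y ⟶ T.X₃} [HasPullback T.g u] (sp : (T.pullbackAlong u).Splitting) :
    (sp.s ≫ pullback.fst T.g u) ≫ T.g = u := by
  rw [Category.assoc, pullback.condition, ← Category.assoc, sp.s_g, Category.id_comp]

end Splitting

end ShortComplex

end CategoryTheory

namespace Deligne

variable {C : Type*} [Category C] [Abelian C] [MonoidalCategory C]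

theorem assocComplex_eq_pullbackAlong [MonoidalPreadditive C] (S : ShortComplex C)
    [HasRightDual S.X₃] :
    assocComplex S = (S.map (tensorRight (S.X₃)ᘁ)).pullbackAlong (η_ S.X₃ (S.X₃)ᘁ) :=
  rfl

variable [SymmetricCategory C]

theorem statement19_general [MonoidalPreadditive C]
    (S : ShortComplex C) [HasRightDual S.X₃] (hS : S.ShortExact) :
    Nonempty S.Splitting ↔ Nonempty (assocComplex S).Splitting := by
  rw [assocComplex_eq_pullbackAlong]
  refine ⟨fun ⟨sp⟩ => ⟨(sp.map (tensorRight _)).pullbackAlong _⟩, fun ⟨sp⟩ => ?_⟩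
  have : IsSplitEpi S.g :=
    isSplitEpi_of_comp_whiskerRight_eq_coevaluation S.g _ sp.s_fst_comp_g
  exact ⟨.ofExactOfSection S hS.exact (section_ S.g) (IsSplitEpi.id S.g) hS.mono_f⟩

/-- In a tensor category in Deligne's sense — a `k`-linear abelian rigid
symmetric monoidal category with `End(1) = k`, over a field `k` of characteristic zero —
a short exact sequence `0 → M → N → P → 0` (with `P` dualizable) splits if and only if the
associated short exact sequence `0 → M ⊗ P^∨ → E → 1 → 0` splits, where `E` is the
preimage in `N ⊗ P^∨` of the coevaluation image of `1` in `P ⊗ P^∨`. -/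
theorem statement19 {k : Type*} [Field k] [CharZero k]
    [Linear k C] [MonoidalPreadditive C] [MonoidalLinear k C]
    (hEnd : ∀ f : End (𝟙_ C), ∃! c : k, f = c • 𝟙 (𝟙_ C))
    (S : ShortComplex C) [HasRightDual S.X₃] (hS : S.ShortExact) :
    Nonempty S.Splitting ↔ Nonempty (assocComplex S).Splitting :=
  statement19_general S hS

end Deligne
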